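/- arXiv:1403.1454 — 2 statements merged into one kernel-verified Lean document; each statement's English description precedes it below -/
import Mathlib

section
/- Let D be a nonzero exponential-polynomial on ℝ of the form f(x) = Σ_{i=1}^m q_i(x) e^{λ_i x} with pairwise distinct λ_i ∈ ℂ and nonzero polynomials q_i. If f(x) → 0 as |x| → ∞ (x ∈ ℝ), then m = 0, i.e., f = 0. -/
/-!
For `t : ℝ` and an index `j`, `x ↦ f (x + t) - e^{λ_j t} f x` is again an exponential
polynomial tending to `0`. Its coefficient of `e^{λ_j x}` is `e^{λ_j t} (q_j (x + t) - q_j x)`,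
of lower degree than `q_j`, while for a generic `t` (one with `e^{λ_i t} ≠ e^{λ_j t}` for all
`i ≠ j`) every other coefficient keeps its degree. Well-founded induction on the vector of
degrees therefore gives `q_i = 0` for `i ≠ j` and `q_j (x + t) = q_j x`, so `q_j` is a
constant `c`. Finally `c e^{λ_j x}` cannot tend to `0` at both ends of the line: its product
with its reflection `c e^{-λ_j x}` is `c²`.
-/

open Filter Function Polynomial Topology

namespace Polynomial

variable {R : Type*} [CommRing R]

theorem degree_taylor_sub_lt {p : R[X]} (hp : p ≠ 0) (t : R) :
    (taylor t p - p).degree < p.degree := by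
  simpa only [degree_taylor] using
    degree_sub_lt_left (degree_taylor p t) (mt (taylor_eq_zero t p).1 hp)
      (leadingCoeff_taylor t p)

theorem degree_C_mul_taylor_sub_C_mul_self_lt {p : R[X]} (hp : p ≠ 0) (a t : R) :
    (C a * taylor t p - C a * p).degree < p.degree := by
  rw [← mul_sub, ← smul_eq_C_mul]
  exact (degree_smul_le a _).trans_lt (degree_taylor_sub_lt hp t)

theorem degree_C_mul_taylor_sub_C_mul [IsDomain R] {a b : R} (hab : a ≠ b) (t : R) (p : R[X]) :
    (C a * taylor t p - C b * p).degree = p.degree := by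
  rcases eq_or_ne p 0 with rfl | hp
  · simp
  have hab' : a - b ≠ 0 := sub_ne_zero.2 hab
  have hsplit : C a * taylor t p - C b * p = C (a - b) * p + (C a * taylor t p - C a * p) := by
    rw [C_sub]; ring
  rw [hsplit, degree_add_eq_left_of_degree_lt] <;> rw [degree_C_mul hab']
  exact degree_C_mul_taylor_sub_C_mul_self_lt hp a t

theorem eq_C_eval_zero_of_taylor_eq [IsDomain R] [CharZero R] {t : R} (ht : t ≠ 0) {p : R[X]}
    (h : taylor t p = p) : p = C (p.eval 0) := by
  have hper : ∀ n : ℕ, p.eval (n * t) = p.eval 0 := by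
    intro n
    induction n with
    | zero => simp
    | succ n ih => rw [Nat.cast_succ, add_one_mul, ← taylor_eval, h, ih]
  have hinj : Injective fun n : ℕ => (n : R) * t := fun m n hmn =>
    Nat.cast_injective (mul_right_cancel₀ ht hmn)
  refine sub_eq_zero.1 (eq_zero_of_infinite_isRoot _ ?_)
  refine (Set.infinite_range_of_injective hinj).mono ?_
  rintro _ ⟨n, rfl⟩
  simp [hper]

end Polynomial

theorem eventually_exp_mul_ne_exp_mul {μ ν : ℂ} (h : μ ≠ ν) :
    ∀ᶠ t : ℝ in 𝓝[≠] 0, Complex.exp (μ * t) ≠ Complex.exp (ν * t) := by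
  have hderiv :
      HasDerivAt (fun t : ℝ => Complex.exp (μ * t) - Complex.exp (ν * t)) (μ - ν) 0 := by
    have hμ := ((hasDerivAt_id (0 : ℂ)).const_mul μ).cexp
    have hν := ((hasDerivAt_id (0 : ℂ)).const_mul ν).cexp
    simpa using (hμ.sub hν).comp_ofReal
  filter_upwards [hderiv.eventually_ne (sub_ne_zero.2 h) (c := 0)] with t ht
  exact sub_ne_zero.1 ht

theorem not_tendsto_cocompact_const_mul_exp {c : ℂ} (hc : c ≠ 0) (μ : ℂ) :
    ¬ Tendsto (fun x : ℝ => c * Complex.exp (μ * x)) (cocompact ℝ) (𝓝 0) := by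
  intro h
  have hprod := h.mul (h.comp (Homeomorph.neg ℝ).isClosedEmbedding.tendsto_cocompact)
  have hconst :
      (fun x : ℝ => c * Complex.exp (μ * x) * (c * Complex.exp (μ * ↑(-x)))) = fun _ => c * c := by
    funext x
    rw [Complex.ofReal_neg, mul_neg, Complex.exp_neg]
    field_simp [Complex.exp_ne_zero]
  rw [mul_zero] at hprod
  exact mul_ne_zero hc hc (tendsto_nhds_unique (hconst ▸ hprod) tendsto_const_nhds).symm

section ExpPoly

variable {ι : Type*}

noncomputable def expPoly [Fintype ι] (q : ι → ℂ[X]) (lam : ι → ℂ) (x : ℝ) : ℂ :=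
  ∑ i, (q i).eval (x : ℂ) * Complex.exp (lam i * x)

noncomputable def shiftSub (q : ι → ℂ[X]) (lam : ι → ℂ) (t : ℝ) (j : ι) (i : ι) : ℂ[X] :=
  C (Complex.exp (lam i * t)) * taylor (t : ℂ) (q i) - C (Complex.exp (lam j * t)) * q i

variable {q : ι → ℂ[X]} {lam : ι → ℂ}

theorem expPoly_shiftSub [Fintype ι] (t : ℝ) (j : ι) (x : ℝ) :
    expPoly (shiftSub q lam t j) lam x =
      expPoly q lam (x + t) - Complex.exp (lam j * t) * expPoly q lam x := by
  simp only [expPoly, shiftSub, Finset.mul_sum, ← Finset.sum_sub_distrib, eval_sub, eval_mul,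
    eval_C, taylor_eval, Complex.ofReal_add, mul_add, Complex.exp_add]
  refine Finset.sum_congr rfl fun i _ => ?_
  ring

theorem tendsto_expPoly_shiftSub [Fintype ι] (h : Tendsto (expPoly q lam) (cocompact ℝ) (𝓝 0))
    (t : ℝ) (j : ι) :
    Tendsto (expPoly (shiftSub q lam t j) lam) (cocompact ℝ) (𝓝 0) := by
  have hshift := h.comp (Homeomorph.addRight t).isClosedEmbedding.tendsto_cocompact
  simpa [funext (expPoly_shiftSub t j)] using hshift.sub (h.const_mul (Complex.exp (lam j * t)))

theorem degree_shiftSub_lt {t : ℝ} {j : ι} (hj : q j ≠ 0)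
    (ht : ∀ i ≠ j, Complex.exp (lam i * t) ≠ Complex.exp (lam j * t)) :
    (fun i => (shiftSub q lam t j i).degree) < fun i => (q i).degree := by
  refine Pi.lt_def.2 ⟨fun i => ?_, j, degree_C_mul_taylor_sub_C_mul_self_lt hj _ _⟩
  rcases eq_or_ne i j with rfl | hi
  · exact (degree_C_mul_taylor_sub_C_mul_self_lt hj _ _).le
  · exact (degree_C_mul_taylor_sub_C_mul (ht i hi) _ _).le

theorem exists_ne_zero_forall_exp_mul_ne [Finite ι] (hlam : Injective lam) (j : ι) :
    ∃ t : ℝ, t ≠ 0 ∧ ∀ i ≠ j, Complex.exp (lam i * t) ≠ Complex.exp (lam j * t) := by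
  have hall : ∀ᶠ t : ℝ in 𝓝[≠] 0, ∀ i ≠ j, Complex.exp (lam i * t) ≠ Complex.exp (lam j * t) :=
    eventually_all.2 fun i => eventually_imp_distrib_left.2 fun hi =>
      eventually_exp_mul_ne_exp_mul (hlam.ne hi)
  exact (hall.and self_mem_nhdsWithin).exists.imp fun t ht => ⟨ht.2, ht.1⟩

theorem eq_zero_of_tendsto_expPoly [Fintype ι] (hlam : Injective lam) (q : ι → ℂ[X])
    (h : Tendsto (expPoly q lam) (cocompact ℝ) (𝓝 0)) : q = 0 := by
  induction q using
    (InvImage.wf (fun q : ι → ℂ[X] => fun i => (q i).degree) wellFounded_lt).induction with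
  | _ q ih =>
    by_contra hne
    obtain ⟨j, hj⟩ : ∃ j, q j ≠ 0 := Function.ne_iff.1 hne
    obtain ⟨t, ht0, ht⟩ := exists_ne_zero_forall_exp_mul_ne hlam j
    have hr := ih _ (degree_shiftSub_lt hj ht) (tendsto_expPoly_shiftSub h t j)
    have hq : ∀ i ≠ j, q i = 0 := fun i hi => by
      rw [← degree_eq_bot, ← degree_C_mul_taylor_sub_C_mul (ht i hi) (t : ℂ)]
      exact degree_eq_bot.2 (congrFun hr i)
    have hqj : q j = C ((q j).eval 0) := by
      refine eq_C_eval_zero_of_taylor_eq (Complex.ofReal_ne_zero.2 ht0) ?_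
      have := congrFun hr j
      rw [shiftSub, Pi.zero_apply, ← mul_sub, mul_eq_zero, C_eq_zero, sub_eq_zero] at this
      exact this.resolve_left (Complex.exp_ne_zero _)
    refine not_tendsto_cocompact_const_mul_exp (c := (q j).eval 0) (fun h0 => hj ?_) (lam j) ?_
    · rw [hqj, h0, map_zero]
    · convert h using 2 with x
      rw [expPoly, Fintype.sum_eq_single j fun i hi => by rw [hq i hi, eval_zero, zero_mul]]
      conv_rhs => rw [hqj, eval_C]

end ExpPoly

/-- An exponential polynomial `f(x) = Σ_{i=1}^m q_i(x) e^{λ_i x}` on `ℝ`, with pairwise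
distinct `λ_i ∈ ℂ` and nonzero polynomials `q_i`, which tends to `0` as `|x| → ∞`,
must be the empty sum: `m = 0`. -/
theorem exp_polynomial_tendsto_zero_on_line
    (m : ℕ) (q : Fin m → Polynomial ℂ) (hq : ∀ i, q i ≠ 0)
    (lam : Fin m → ℂ) (hlam : Function.Injective lam)
    (f : ℝ → ℂ)
    (hf : ∀ x : ℝ, f x = ∑ i, (q i).eval (x : ℂ) * Complex.exp (lam i * (x : ℂ)))
    (hlim : Filter.Tendsto f (Filter.cocompact ℝ) (nhds 0)) :
    m = 0 := by
  have hexp : f = expPoly q lam := funext hf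
  have hzero : q = 0 := eq_zero_of_tendsto_expPoly hlam q (hexp ▸ hlim)
  by_contra hm
  exact hq ⟨0, Nat.pos_of_ne_zero hm⟩ (congrFun hzero _)
end

section
/- With notation as in the Paley-Wiener comparison lemma, for each r > 0, ε > 0, and N ∈ ℕ there is a constant c > 0 (depending only on N, r, ε, D) such that for every family f ∈ PW̲^r one has the seminorm estimate N^{r+ε}_N(f) ≤ c · N̲_{4N+4D}(f), where N^{r+ε}_N(f) = sup_{e,λ∈V_{e,ℂ}*}(1+d(e)+|λ|)^N e^{-(r+ε)|Re λ|}|f_e(λ)| and N̲_M(f) = sup_{e, λ∈iV_e*}(1+d(e)+|λ|)^M |f_e(λ)|. -/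
open scoped BigOperators

/-- The hermitian norm of the real part of `λ ∈ ℂⁿ`. -/
noncomputable def reNorm {n : ℕ} (ν : EuclideanSpace ℂ (Fin n)) : ℝ :=
  Real.sqrt (∑ j, (ν j).re ^ 2)

/-!
Restrict `f_e` to the complex line `γ w = w a + i b` through `ν`, where `a` is the unit vector
in the direction of `Re ν` and `b = Im ν`: then `reNorm (γ w) = |Re w|`, `γ` maps the imaginary
axis to purely imaginary vectors, and `‖γ w‖² = |w + i s|² + T²` for constants `s, T`.
The affine function `W w = κ + T + w + i s` therefore satisfies `|W w| ≍ κ + ‖γ w‖` on the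
closed right half-plane, so `f_e (γ w) W(w)^M e^{-r w}` is bounded there by the rapid decay of
`f_e`, and by `2^M B` on the imaginary axis. Phragmén–Lindelöf bounds it by `2^M B` at
`w = reNorm ν`, which is the estimate with `c = 4^M`, `M = 4N + 4D`.
-/

open Complex Filter

theorem norm_le_of_bounded_on_right_half_plane {E : Type*} [NormedAddCommGroup E]
    [NormedSpace ℂ E] {f : ℂ → E} {C C' : ℝ} (hd : DiffContOnCl ℂ f {z | 0 < z.re})
    (hbdd : ∀ z : ℂ, 0 ≤ z.re → ‖f z‖ ≤ C') (him : ∀ t : ℝ, ‖f (t * I)‖ ≤ C)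
    {z : ℂ} (hz : 0 ≤ z.re) : ‖f z‖ ≤ C := by
  refine PhragmenLindelof.right_half_plane_of_bounded_on_real hd ⟨0, two_pos, 0, ?_⟩
    ⟨C', eventually_map.2 ((eventually_ge_atTop 0).mono fun x hx => ?_)⟩ him hz
  · refine Asymptotics.IsBigO.of_bound C' (eventually_inf_principal.2 (Eventually.of_forall ?_))
    intro w hw
    simpa using hbdd w hw.le
  · simpa using hbdd x (by simpa using hx)

theorem norm_le_mul_exp_of_imaginary_bound {E : Type*} [NormedAddCommGroup E]
    [NormedSpace ℂ E] {f : ℂ → E} {r B K : ℝ} (hf : Differentiable ℂ f)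
    (hgrowth : ∀ z : ℂ, 0 ≤ z.re → ‖f z‖ ≤ K * Real.exp (r * z.re))
    (him : ∀ t : ℝ, ‖f (t * I)‖ ≤ B) {z : ℂ} (hz : 0 ≤ z.re) :
    ‖f z‖ ≤ B * Real.exp (r * z.re) := by
  have hnorm : ∀ w : ℂ, ‖cexp (-r * w) • f w‖ = Real.exp (-(r * w.re)) * ‖f w‖ := fun w => by
    rw [norm_smul, Complex.norm_exp, neg_mul, neg_re, re_ofReal_mul]
  have hbdd := norm_le_of_bounded_on_right_half_plane (C := B) (C' := K)
    (f := fun w => cexp (-r * w) • f w) (by fun_prop : Differentiable ℂ _).diffContOnCl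
    (fun w hw => by
      rw [hnorm, Real.exp_neg, inv_mul_le_iff₀ (Real.exp_pos _), mul_comm]
      exact hgrowth w hw)
    (fun t => by rw [hnorm]; simpa using him t) hz
  rwa [hnorm, Real.exp_neg, inv_mul_le_iff₀ (Real.exp_pos _), mul_comm] at hbdd

theorem reNorm_nonneg {n : ℕ} (ν : EuclideanSpace ℂ (Fin n)) : 0 ≤ reNorm ν :=
  Real.sqrt_nonneg _

section ComplexLine

variable {n : ℕ} (a b : Fin n → ℝ)

noncomputable def complexLine (w : ℂ) : EuclideanSpace ℂ (Fin n) :=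
  w • WithLp.toLp 2 (fun j => (a j : ℂ)) + WithLp.toLp 2 (fun j => (b j : ℂ) * I)

theorem complexLine_apply (w : ℂ) (j : Fin n) : complexLine a b w j = w * a j + b j * I := rfl

theorem re_complexLine_apply (w : ℂ) (j : Fin n) : (complexLine a b w j).re = w.re * a j := by
  simp [complexLine_apply]

theorem im_complexLine_apply (w : ℂ) (j : Fin n) :
    (complexLine a b w j).im = w.im * a j + b j := by
  simp [complexLine_apply]

theorem differentiable_complexLine : Differentiable ℂ (complexLine a b) :=
  (differentiable_id.smul_const _).add_const _

variable {a}

theorem reNorm_complexLine (ha : ∑ j, a j ^ 2 = 1) (w : ℂ) :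
    reNorm (complexLine a b w) = |w.re| := by
  simp only [reNorm, re_complexLine_apply, mul_pow, ← Finset.mul_sum, ha, mul_one,
    Real.sqrt_sq_eq_abs]

theorem norm_complexLine_sq (ha : ∑ j, a j ^ 2 = 1) (w : ℂ) :
    ‖complexLine a b w‖ ^ 2 =
      ‖w + (∑ j, a j * b j) * I‖ ^ 2 + ∑ j, (b j - (∑ i, a i * b i) * a j) ^ 2 := by
  set s := ∑ j, a j * b j with hs
  have hterm : ∀ j, ‖complexLine a b w j‖ ^ 2 =
      (w.re ^ 2 + w.im ^ 2) * a j ^ 2 + 2 * w.im * (a j * b j) + b j ^ 2 := by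
    intro j
    rw [Complex.sq_norm, Complex.normSq_apply, re_complexLine_apply, im_complexLine_apply]
    ring
  have hperp : ∀ j, (b j - s * a j) ^ 2 = b j ^ 2 - 2 * s * (a j * b j) + s ^ 2 * a j ^ 2 := by
    intro j; ring
  rw [EuclideanSpace.norm_sq_eq, Finset.sum_congr rfl fun j _ => hterm j,
    Finset.sum_congr rfl fun j _ => hperp j, Complex.sq_norm, Complex.normSq_apply]
  simp only [Finset.sum_add_distrib, Finset.sum_sub_distrib, ← Finset.mul_sum, ha, ← hs]
  simp only [mul_one, add_re, mul_re, ofReal_re, I_re, mul_zero, ofReal_im, I_im, sub_self,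
    add_zero, add_im, mul_im]
  ring

theorem complexLine_div_reNorm_self (ν : EuclideanSpace ℂ (Fin n)) (hA : 0 < reNorm ν) :
    complexLine (fun j => (ν j).re / reNorm ν) (fun j => (ν j).im) (reNorm ν) = ν := by
  ext j
  apply Complex.ext
  · simp only [re_complexLine_apply, ofReal_re]
    field_simp
  · simp [im_complexLine_apply]

theorem sum_sq_div_reNorm_eq_one (ν : EuclideanSpace ℂ (Fin n)) (hA : 0 < reNorm ν) :
    ∑ j, ((ν j).re / reNorm ν) ^ 2 = 1 := by
  have hsq : reNorm ν ^ 2 = ∑ j, (ν j).re ^ 2 := Real.sq_sqrt (by positivity)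
  simp only [div_pow, ← Finset.sum_div, ← hsq]
  field_simp

theorem re_eq_zero_of_reNorm_eq_zero {ν : EuclideanSpace ℂ (Fin n)} (h : reNorm ν = 0)
    (j : Fin n) : (ν j).re = 0 := by
  rw [reNorm, Real.sqrt_eq_zero (by positivity),
    Finset.sum_eq_zero_iff_of_nonneg fun i _ => sq_nonneg _] at h
  exact pow_eq_zero_iff two_ne_zero |>.mp (h j (Finset.mem_univ j))

end ComplexLine

section Weight

variable {κ T X : ℝ} {z : ℂ}

theorem norm_ofReal_add_le_two_mul (hκ : 0 ≤ κ) (hT : 0 ≤ T) (hX : 0 ≤ X)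
    (h : X ^ 2 = ‖z‖ ^ 2 + T ^ 2) : ‖((κ + T : ℝ) : ℂ) + z‖ ≤ 2 * (κ + X) := by
  have hzX : ‖z‖ ≤ X := by nlinarith [norm_nonneg z]
  have hTX : T ≤ X := by nlinarith
  calc ‖((κ + T : ℝ) : ℂ) + z‖ ≤ ‖((κ + T : ℝ) : ℂ)‖ + ‖z‖ := norm_add_le _ _
    _ = κ + T + ‖z‖ := by rw [Complex.norm_real, Real.norm_of_nonneg (add_nonneg hκ hT)]
    _ ≤ 2 * (κ + X) := by linarith

theorem le_two_mul_norm_ofReal_add (hz : 0 ≤ z.re) (hT : 0 ≤ T)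
    (h : X ^ 2 = ‖z‖ ^ 2 + T ^ 2) : κ + X ≤ 2 * ‖((κ + T : ℝ) : ℂ) + z‖ := by
  have hXz : X ≤ ‖z‖ + T := by nlinarith [norm_nonneg z]
  have hz_le : ‖z‖ ≤ z.re + |z.im| := by
    simpa [abs_of_nonneg hz] using Complex.norm_le_abs_re_add_abs_im z
  have hre := Complex.re_le_norm (((κ + T : ℝ) : ℂ) + z)
  have him := Complex.abs_im_le_norm (((κ + T : ℝ) : ℂ) + z)
  simp only [add_re, ofReal_re, add_im, ofReal_im, zero_add] at hre him
  linarith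

end Weight

section PaleyWiener

variable {n : ℕ} {g : EuclideanSpace ℂ (Fin n) → ℂ} {κ r B C : ℝ} {M : ℕ}

theorem weighted_norm_le_on_complexLine (hg : Differentiable ℂ g) {a : Fin n → ℝ}
    (b : Fin n → ℝ) (ha : ∑ j, a j ^ 2 = 1) (hκ : 0 ≤ κ)
    (hgrowth : ∀ ν, (1 + ‖ν‖) ^ M * ‖g ν‖ ≤ C * Real.exp (r * reNorm ν))
    (hB : ∀ ν, (∀ j, (ν j).re = 0) → (κ + ‖ν‖) ^ M * ‖g ν‖ ≤ B) {w : ℂ} (hw : 0 ≤ w.re) :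
    (κ + ‖complexLine a b w‖) ^ M * ‖g (complexLine a b w)‖ ≤
      4 ^ M * B * Real.exp (r * w.re) := by
  set γ := complexLine a b
  set s := ∑ j, a j * b j
  set T := Real.sqrt (∑ j, (b j - s * a j) ^ 2)
  have hT : 0 ≤ T := Real.sqrt_nonneg _
  have hγ : ∀ w, ‖γ w‖ ^ 2 = ‖w + s * I‖ ^ 2 + T ^ 2 := fun w => by
    rw [Real.sq_sqrt (by positivity)]; exact norm_complexLine_sq b ha w
  set W : ℂ → ℂ := fun w => ((κ + T : ℝ) : ℂ) + (w + s * I)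
  have hW_le : ∀ w, ‖W w‖ ≤ 2 * (κ + ‖γ w‖) := fun w =>
    norm_ofReal_add_le_two_mul hκ hT (norm_nonneg _) (hγ w)
  set h : ℂ → ℂ := fun w => W w ^ M * g (γ w)
  have hh : Differentiable ℂ h :=
    (by fun_prop : Differentiable ℂ fun w => W w ^ M).mul (hg.comp (differentiable_complexLine a b))
  have hh_growth : ∀ w : ℂ, 0 ≤ w.re → ‖h w‖ ≤ (2 * (κ + 1)) ^ M * C * Real.exp (r * w.re) := by
    intro w hw
    have hWγ : ‖W w‖ ≤ 2 * (κ + 1) * (1 + ‖γ w‖) := by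
      nlinarith [hW_le w, norm_nonneg (γ w)]
    have hgγ := hgrowth (γ w)
    rw [reNorm_complexLine b ha, abs_of_nonneg hw] at hgγ
    calc ‖h w‖ = ‖W w‖ ^ M * ‖g (γ w)‖ := by simp only [h, norm_mul, norm_pow]
      _ ≤ (2 * (κ + 1)) ^ M * ((1 + ‖γ w‖) ^ M * ‖g (γ w)‖) := by
        rw [← mul_assoc, ← mul_pow]; gcongr
      _ ≤ (2 * (κ + 1)) ^ M * C * Real.exp (r * w.re) := by rw [mul_assoc]; gcongr
  have him : ∀ t : ℝ, ‖h (t * I)‖ ≤ 2 ^ M * B := by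
    intro t
    have hre : ∀ j, (γ (t * I) j).re = 0 := fun j => by
      rw [re_complexLine_apply]; simp
    calc ‖h (t * I)‖ ≤ (2 * (κ + ‖γ (t * I)‖)) ^ M * ‖g (γ (t * I))‖ := by
          simp only [h, norm_mul, norm_pow]; gcongr; exact hW_le _
      _ = 2 ^ M * ((κ + ‖γ (t * I)‖) ^ M * ‖g (γ (t * I))‖) := by rw [mul_pow]; ring
      _ ≤ 2 ^ M * B := by gcongr; exact hB _ hre
  have hκW : κ + ‖γ w‖ ≤ 2 * ‖W w‖ :=
    le_two_mul_norm_ofReal_add (by simpa [W] using hw) hT (hγ w)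
  calc (κ + ‖γ w‖) ^ M * ‖g (γ w)‖ ≤ 2 ^ M * ‖h w‖ := by
        simp only [h, norm_mul, norm_pow, ← mul_assoc, ← mul_pow]; gcongr
    _ ≤ 2 ^ M * (2 ^ M * B * Real.exp (r * w.re)) := by
        gcongr; exact norm_le_mul_exp_of_imaginary_bound hh hh_growth him hw
    _ = 4 ^ M * B * Real.exp (r * w.re) := by
      rw [show (4 : ℝ) = 2 * 2 by norm_num, mul_pow]
      ring

theorem weighted_norm_le_of_imaginary_bound (hg : Differentiable ℂ g) (hκ : 0 ≤ κ)
    (hgrowth : ∀ ν, (1 + ‖ν‖) ^ M * ‖g ν‖ ≤ C * Real.exp (r * reNorm ν))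
    (hB : ∀ ν, (∀ j, (ν j).re = 0) → (κ + ‖ν‖) ^ M * ‖g ν‖ ≤ B) (ν : EuclideanSpace ℂ (Fin n)) :
    (κ + ‖ν‖) ^ M * ‖g ν‖ ≤ 4 ^ M * B * Real.exp (r * reNorm ν) := by
  rcases (reNorm_nonneg ν).eq_or_lt with hre | hre
  · have hν := hB ν (re_eq_zero_of_reNorm_eq_zero hre.symm)
    rw [← hre, mul_zero, Real.exp_zero, mul_one]
    exact hν.trans (le_mul_of_one_le_left ((by positivity : (0 : ℝ) ≤ _).trans hν)
      (one_le_pow₀ (by norm_num)))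
  · have hline := weighted_norm_le_on_complexLine hg (fun j => (ν j).im)
      (sum_sq_div_reNorm_eq_one ν hre) hκ hgrowth hB (w := reNorm ν) (by simpa using hre.le)
    rwa [complexLine_div_reNorm_self ν hre, ofReal_re] at hline

end PaleyWiener

theorem paleyWiener_seminorm_estimate_general
    (E : Type*) (D : ℕ) (d : E → ℝ) (hd : ∀ e, 0 ≤ d e)
    (dim : E → ℕ)
    (r ε : ℝ) (hε : 0 < ε) (N : ℕ) :
    ∃ c : ℝ, 0 < c ∧
      ∀ f : ∀ e : E, EuclideanSpace ℂ (Fin (dim e)) → ℂ,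
        (∀ e, Differentiable ℂ (f e)) →
        (∀ (e : E) (N' : ℕ), ∃ C : ℝ, ∀ ν : EuclideanSpace ℂ (Fin (dim e)),
            (1 + ‖ν‖) ^ N' * ‖f e ν‖ ≤ C * Real.exp (r * reNorm ν)) →
        ∀ B : ℝ,
          (∀ (e : E) (ν : EuclideanSpace ℂ (Fin (dim e))), (∀ j, (ν j).re = 0) →
              (1 + d e + ‖ν‖) ^ (4 * N + 4 * D) * ‖f e ν‖ ≤ B) →
          ∀ (e : E) (ν : EuclideanSpace ℂ (Fin (dim e))),
            (1 + d e + ‖ν‖) ^ N * ‖f e ν‖ ≤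
              c * B * Real.exp ((r + ε) * reNorm ν) := by
  refine ⟨4 ^ (4 * N + 4 * D), by positivity, fun f hf hexp B hB e ν => ?_⟩
  obtain ⟨C, hC⟩ := hexp e (4 * N + 4 * D)
  have hκ : 0 ≤ 1 + d e := by linarith [hd e]
  have hB0 : 0 ≤ B := (by positivity : (0 : ℝ) ≤ _).trans (hB e 0 fun j => by simp)
  calc (1 + d e + ‖ν‖) ^ N * ‖f e ν‖ ≤ (1 + d e + ‖ν‖) ^ (4 * N + 4 * D) * ‖f e ν‖ := by
        gcongr
        · linarith [norm_nonneg ν, hd e]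
        · omega
    _ ≤ 4 ^ (4 * N + 4 * D) * B * Real.exp (r * reNorm ν) :=
        weighted_norm_le_of_imaginary_bound (hf e) hκ hC (hB e) ν
    _ ≤ 4 ^ (4 * N + 4 * D) * B * Real.exp ((r + ε) * reNorm ν) := by
        gcongr
        · exact reNorm_nonneg ν
        · linarith

/-- Seminorm estimate for the inclusion `PW̲^r ⊆ PW^{r+ε}`: there is a constant
`c > 0` depending only on `N`, `r`, `ε` and `D` such that, for every family `f ∈ PW̲^r`
(entire, with per-element exponential type `r` bounds), if `B` bounds the seminorm
`N̲_{4N+4D}(f) = sup (1+d(e)+|λ|)^{4N+4D} |f_e(λ)|` over imaginary `λ`, then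
`(1+d(e)+|λ|)^N e^{-(r+ε)|Re λ|} |f_e(λ)| ≤ c B` everywhere, i.e.
`N^{r+ε}_N(f) ≤ c · N̲_{4N+4D}(f)`. -/
theorem paleyWiener_seminorm_estimate
    (E : Type*) (D : ℕ) (d : E → ℝ) (hd : ∀ e, 0 ≤ d e)
    (dim : E → ℕ) (hdim : ∀ e, dim e ≤ D)
    (r ε : ℝ) (hr : 0 < r) (hε : 0 < ε) (N : ℕ) :
    ∃ c : ℝ, 0 < c ∧
      ∀ f : ∀ e : E, EuclideanSpace ℂ (Fin (dim e)) → ℂ,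
        (∀ e, Differentiable ℂ (f e)) →
        (∀ (e : E) (N' : ℕ), ∃ C : ℝ, ∀ ν : EuclideanSpace ℂ (Fin (dim e)),
            (1 + ‖ν‖) ^ N' * ‖f e ν‖ ≤ C * Real.exp (r * reNorm ν)) →
        ∀ B : ℝ,
          (∀ (e : E) (ν : EuclideanSpace ℂ (Fin (dim e))), (∀ j, (ν j).re = 0) →
              (1 + d e + ‖ν‖) ^ (4 * N + 4 * D) * ‖f e ν‖ ≤ B) →
          ∀ (e : E) (ν : EuclideanSpace ℂ (Fin (dim e))),
            (1 + d e + ‖ν‖) ^ N * ‖f e ν‖ ≤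
              c * B * Real.exp ((r + ε) * reNorm ν) :=
  paleyWiener_seminorm_estimate_general E D d hd dim r ε hε N
end
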